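/- For a linear map Φ : M_n(𝕂) → M_m(𝕂), the following are equivalent: (i) the Choi matrix C_Φ lies in SEP_p(𝕂ⁿ⊗𝕂ᵐ); (ii) there exist matrices C₁,…,C_k ∈ M_{m,n}(𝕂) each of rank ≤ p such that Φ(X) = Σ_i C_i X C_i* for all X. -/

import Mathlib

open Matrix
open scoped ComplexOrder Kronecker

/-- Vectorization `Vec(A)` of a rectangular matrix: `Vec(A) = ∑ᵢⱼ aᵢⱼ eᵢ ⊗ eⱼ`. -/
def vecOf {n m : ℕ} {𝕜 : Type*} (A : Matrix (Fin n) (Fin m) 𝕜) : Fin n × Fin m → 𝕜 :=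
  fun x => A x.1 x.2

/-- The Choi matrix `C_Φ = ∑ᵢⱼ Eᵢⱼ ⊗ Φ(Eᵢⱼ)` of a map `Φ`. -/
def choi {𝕜 : Type*} [RCLike 𝕜] {n m : ℕ}
    (Φ : Matrix (Fin n) (Fin n) 𝕜 → Matrix (Fin m) (Fin m) 𝕜) :
    Matrix (Fin n × Fin m) (Fin n × Fin m) 𝕜 :=
  ∑ i : Fin n, ∑ j : Fin n, Matrix.single i j 1 ⊗ₖ Φ (Matrix.single i j 1)

/-- A map between matrix algebras is positive if it commutes with the adjoint and
preserves positive semidefiniteness. -/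
def IsPosMap {𝕜 : Type*} [RCLike 𝕜] {I J : Type*} [Fintype I] [Fintype J]
    (Φ : Matrix I I 𝕜 → Matrix J J 𝕜) : Prop :=
  (∀ A, Φ Aᴴ = (Φ A)ᴴ) ∧ ∀ A, A.PosSemidef → (Φ A).PosSemidef

/-- The ampliation `Φ ⊗ id_p` of a map `Φ`. -/
def amplify {𝕜 : Type*} [RCLike 𝕜] {n m : ℕ}
    (Φ : Matrix (Fin n) (Fin n) 𝕜 → Matrix (Fin m) (Fin m) 𝕜) (p : ℕ) :
    Matrix (Fin n × Fin p) (Fin n × Fin p) 𝕜 → Matrix (Fin m × Fin p) (Fin m × Fin p) 𝕜 :=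
  fun M => Matrix.of fun x y => Φ (Matrix.of fun i j => M (i, x.2) (j, y.2)) x.1 y.1

/-- `Φ` is `p`-positive if `Φ ⊗ id_p` is positive. -/
def IsPPositive {𝕜 : Type*} [RCLike 𝕜] {n m : ℕ} (p : ℕ)
    (Φ : Matrix (Fin n) (Fin n) 𝕜 → Matrix (Fin m) (Fin m) 𝕜) : Prop :=
  IsPosMap (amplify Φ p)

/-- The complexification `Φ̃(X + iY) = Φ(X) + iΦ(Y)` of a real linear map. -/
noncomputable def complexify {n m : ℕ}
    (Φ : Matrix (Fin n) (Fin n) ℝ →ₗ[ℝ] Matrix (Fin m) (Fin m) ℝ) :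
    Matrix (Fin n) (Fin n) ℂ → Matrix (Fin m) (Fin m) ℂ :=
  fun M => (Φ (Matrix.of fun i j => (M i j).re)).map Complex.ofReal
    + Complex.I • (Φ (Matrix.of fun i j => (M i j).im)).map Complex.ofReal

/-- The operator (spectral) norm of a real matrix. -/
noncomputable def opNorm {n m : ℕ} (A : Matrix (Fin n) (Fin m) ℝ) : ℝ :=
  ‖(Matrix.toEuclideanLin A).toContinuousLinearMap‖

/-- The cone `SEP_p(𝕜ⁿ ⊗ 𝕜ᵐ)` of sums `∑ⱼ Vec(Aⱼ)Vec(Aⱼ)*` with `rank Aⱼ ≤ p`. -/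
def SEPp (𝕜 : Type*) [RCLike 𝕜] (n m p : ℕ) :
    Set (Matrix (Fin n × Fin m) (Fin n × Fin m) 𝕜) :=
  {M | ∃ (k : ℕ) (A : Fin k → Matrix (Fin n) (Fin m) 𝕜),
    (∀ j, (A j).rank ≤ p) ∧
    M = ∑ j, vecMulVec (vecOf (A j)) (star (vecOf (A j)))}

/-- The cone of separable matrices: sums of Kronecker products of PSD matrices. -/
def SEPProd (𝕜 : Type*) [RCLike 𝕜] (n m : ℕ) :
    Set (Matrix (Fin n × Fin m) (Fin n × Fin m) 𝕜) :=
  {M | ∃ (k : ℕ) (A : Fin k → Matrix (Fin n) (Fin n) 𝕜) (B : Fin k → Matrix (Fin m) (Fin m) 𝕜),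
    (∀ j, (A j).PosSemidef) ∧ (∀ j, (B j).PosSemidef) ∧ M = ∑ j, A j ⊗ₖ B j}

/-- Partial transpose on the first tensor factor: `τ_n ⊗ id_m`. -/
def ptransposeFst {𝕜 : Type*} {n m : ℕ} (M : Matrix (Fin n × Fin m) (Fin n × Fin m) 𝕜) :
    Matrix (Fin n × Fin m) (Fin n × Fin m) 𝕜 :=
  Matrix.of fun x y => M (y.1, x.2) (x.1, y.2)

/-- Partial transpose on the second tensor factor: `id_n ⊗ τ_m`. -/
def ptransposeSnd {𝕜 : Type*} {n m : ℕ} (M : Matrix (Fin n × Fin m) (Fin n × Fin m) 𝕜) :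
    Matrix (Fin n × Fin m) (Fin n × Fin m) 𝕜 :=
  Matrix.of fun x y => M (x.1, y.2) (y.1, x.2)


lemma mulE_apply {𝕜 : Type*} [RCLike 𝕜] {n m : ℕ} (C : Matrix (Fin m) (Fin n) 𝕜)
    (i j : Fin n) (a b : Fin m) :
    (C * Matrix.single i j (1:𝕜) * Cᴴ) a b = C a i * star (C b j) := by
  simp [Matrix.mul_apply, Matrix.single, Matrix.conjTranspose_apply,
    Finset.sum_ite_eq, ite_and, mul_comm]

lemma choi_apply' {𝕜 : Type*} [RCLike 𝕜] {n m : ℕ}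
    (Φ : Matrix (Fin n) (Fin n) 𝕜 → Matrix (Fin m) (Fin m) 𝕜)
    (i j : Fin n) (a b : Fin m) :
    choi Φ (i, a) (j, b) = Φ (Matrix.single i j 1) a b := by
  simp [choi, Matrix.sum_apply, Matrix.kroneckerMap_apply, Matrix.single,
    ite_and, Finset.sum_ite_eq]

lemma kraus_of_basis {𝕜 : Type*} [RCLike 𝕜] {n m : ℕ}
    (Φ : Matrix (Fin n) (Fin n) 𝕜 →ₗ[𝕜] Matrix (Fin m) (Fin m) 𝕜)
    {k : ℕ} (C : Fin k → Matrix (Fin m) (Fin n) 𝕜)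
    (h : ∀ i j, Φ (Matrix.single i j (1:𝕜)) = ∑ t, C t * Matrix.single i j (1:𝕜) * (C t)ᴴ)
    (X : Matrix (Fin n) (Fin n) 𝕜) : Φ X = ∑ t, C t * X * (C t)ᴴ := by
  have hX : X = ∑ i, ∑ j, X i j • Matrix.single i j (1:𝕜) := by
    conv_lhs => rw [matrix_eq_sum_single X]
    simp [smul_single]
  rw [hX]
  simp only [map_sum, _root_.map_smul, h, Finset.smul_sum, Matrix.mul_sum, Matrix.sum_mul,
    Matrix.mul_smul, Matrix.smul_mul]
  conv_rhs => rw [Finset.sum_comm]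
  refine Finset.sum_congr rfl fun i _ => ?_
  rw [Finset.sum_comm]

/-- The Choi matrix of `Φ` lies in `SEP_p` iff `Φ(X) = ∑ᵢ Cᵢ X Cᵢ*` for some matrices
`Cᵢ` of rank at most `p`. -/
theorem stmt17 {𝕜 : Type*} [RCLike 𝕜] {n m : ℕ} (p : ℕ)
    (Φ : Matrix (Fin n) (Fin n) 𝕜 →ₗ[𝕜] Matrix (Fin m) (Fin m) 𝕜) :
    choi ⇑Φ ∈ SEPp 𝕜 n m p ↔
      ∃ (k : ℕ) (C : Fin k → Matrix (Fin m) (Fin n) 𝕜),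
        (∀ i, (C i).rank ≤ p) ∧ ∀ X, Φ X = ∑ i, C i * X * (C i)ᴴ := by

  constructor
  · rintro ⟨k, A, hA, hM⟩
    refine ⟨k, fun t => (A t)ᵀ, fun t => by rw [Matrix.rank_transpose]; exact hA t, ?_⟩
    refine kraus_of_basis Φ _ fun i j => ?_
    ext a b
    have h := congrArg (fun M => M (i, a) (j, b)) hM
    simp only [choi_apply'] at h
    rw [h]
    simp [Matrix.sum_apply, Matrix.vecMulVec_apply, vecOf, mulE_apply,
      Matrix.transpose_apply]
  · rintro ⟨k, C, hC, hΦ⟩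
    refine ⟨k, fun t => (C t)ᵀ, fun t => by rw [Matrix.rank_transpose]; exact hC t, ?_⟩
    ext ⟨i, a⟩ ⟨j, b⟩
    rw [choi_apply', hΦ]
    simp [Matrix.sum_apply, Matrix.vecMulVec_apply, vecOf, mulE_apply,
      Matrix.transpose_apply]
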